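/- Let w = lim_k w(k) ∈ {0,1}^ℕ, where w(0)=1 and w(k+1) = w(k)0^{ω(1)}w(k)0^{ω(2)}⋯w(k)0^{ω(2b_{k+1})}. Then w = 1 0^{ω(1)} 1 0^{ω(2)} 1 0^{ω(3)} ⋯, i.e. the positions of the symbol 1 in w are exactly {z_0(i) : i ∈ ℕ} where z_0(i) = i + ∑_{j=1}^{i} ω(j). -/

import Mathlib

/-- the words w(k) over {0,1}: w(0) = [1],
    w(k+1) = w(k) 0^{ω(1)} w(k) 0^{ω(2)} ⋯ w(k) 0^{ω(2 b_{k+1})}. -/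
def wseq (b : ℕ → ℕ) : ℕ → List ℕ
  | 0 => [1]
  | k + 1 =>
      List.flatten ((List.range (2 * b (k + 1))).map fun i =>
        wseq b k ++ List.replicate (padicValNat 2 (i + 1)) 0)

namespace S17

def unitW (j : ℕ) : List ℕ := 1 :: List.replicate (padicValNat 2 (j+1)) 0

def W (m : ℕ) : List ℕ := ((List.range m).map unitW).flatten

def z0 (i : ℕ) : ℕ := i + ∑ j ∈ Finset.Icc 1 i, padicValNat 2 j

lemma val_odd (n : ℕ) : padicValNat 2 (2*n+1) = 0 :=
  padicValNat.eq_zero_of_not_dvd (by omega)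

lemma val_even (n : ℕ) : padicValNat 2 (2*(n+1)) = 1 + padicValNat 2 (n+1) := by
  rw [padicValNat.mul (by norm_num) (by omega), padicValNat.self (by norm_num)]

lemma W_succ (m : ℕ) : W (m+1) = W m ++ unitW m := by
  simp [W, List.range_succ]

lemma z0_succ (i : ℕ) : z0 (i+1) = z0 i + 1 + padicValNat 2 (i+1) := by
  simp only [z0, Finset.sum_Icc_succ_top (by omega : 1 ≤ i+1)]
  ring

lemma W_length (m : ℕ) : (W m).length = z0 m := by
  induction m with
  | zero => simp [W, z0]
  | succ m ih => rw [W_succ, z0_succ]; simp [unitW, ih]; ring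

lemma z0_strictMono : StrictMono z0 := by
  apply strictMono_nat_of_lt_succ
  intro i; rw [z0_succ]; omega

lemma W_add (a c : ℕ) : W (a + c) = W a ++ ((List.range c).map (fun j => unitW (a + j))).flatten := by
  simp [W, List.range_add, Function.comp_def]

lemma Sub (E : ℕ) : ∀ n, (((List.range (2^E)).map (fun j => unitW (n * 2^E + j))).flatten)
    = W (2^E) ++ List.replicate (padicValNat 2 (n+1)) 0 := by
  induction E with
  | zero =>
    intro n
    rw [pow_zero]
    have hr : List.range 1 = [0] := rfl
    simp [W, unitW, hr]
  | succ E ih =>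
    have key : ∀ n, (((List.range (2^(E+1))).map (fun j => unitW (n * 2^(E+1) + j))).flatten)
        = W (2^E) ++ List.replicate (padicValNat 2 (2*n+1)) 0
          ++ (W (2^E) ++ List.replicate (padicValNat 2 (2*n+2)) 0) := by
      intro n
      have h2 : 2^(E+1) = 2^E + 2^E := by ring
      rw [h2, List.range_add, List.map_append, List.map_map, List.flatten_append]
      have e1 : (fun j => unitW (n * (2^E + 2^E) + j)) = (fun j => unitW ((2*n) * 2^E + j)) := by
        funext j; ring_nf
      have e2 : ((fun j => unitW (2 * n * 2^E + j)) ∘ (fun x => 2^E + x))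
          = (fun j => unitW ((2*n+1) * 2^E + j)) := by
        funext j; simp [Function.comp]; ring_nf
      rw [e1, e2, ih (2*n), ih (2*n+1)]
    intro n
    have hW : W (2^(E+1)) = W (2^E) ++ (W (2^E) ++ [0]) := by
      have h0 : W (2^(E+1))
          = (((List.range (2^(E+1))).map (fun j => unitW (0 * 2^(E+1) + j))).flatten) := by
        simp [W]
      have hv2 : padicValNat 2 2 = 1 := padicValNat.self one_lt_two
      rw [h0, key 0]
      norm_num [hv2]
    rw [key n, hW]
    have hv : padicValNat 2 (2*n+2) = 1 + padicValNat 2 (n+1) := by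
      have : 2*n+2 = 2*(n+1) := by ring
      rw [this, val_even]
    rw [val_odd n, hv]
    simp [List.replicate_add]

lemma W_mul (E n : ℕ) : W (n * 2^E) =
    ((List.range n).map (fun i => W (2^E) ++ List.replicate (padicValNat 2 (i+1)) 0)).flatten := by
  induction n with
  | zero => simp [W]
  | succ n ih =>
    have h : (n+1) * 2^E = n * 2^E + 2^E := by ring
    rw [h, W_add, Sub E n, List.range_succ, List.map_append, List.flatten_append, ih]
    simp

lemma W_prefix {a m : ℕ} (h : a ≤ m) : ∃ L, W m = W a ++ L := by
  obtain ⟨c, rfl⟩ := Nat.exists_eq_add_of_le h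
  exact ⟨_, W_add a c⟩

lemma W_getD_z0 {i m : ℕ} (h : i < m) : (W m).getD (z0 i) 0 = 1 := by
  obtain ⟨L, hL⟩ := W_prefix (show i + 1 ≤ m by omega)
  rw [hL, List.getD_append _ _ _ _ (by rw [W_length, z0_succ]; omega),
    W_succ, List.getD_append_right _ _ _ _ (by rw [W_length])]
  rw [W_length]
  simp [unitW]

lemma W_getD_one {m n : ℕ} (hn : n < (W m).length) (h : (W m).getD n 0 = 1) :
    ∃ i, n = z0 i := by
  induction m with
  | zero => simp [W] at hn
  | succ m ih =>
    rcases lt_or_ge n (W m).length with hlt | hge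
    · refine ih hlt ?_
      rw [W_succ, List.getD_append _ _ _ _ hlt] at h
      exact h
    · rw [W_succ, List.getD_append_right _ _ _ _ hge] at h
      rcases hge.lt_or_eq with hgt | heq
      · exfalso
        obtain ⟨t, ht⟩ := Nat.exists_eq_add_of_lt hgt
        have h1 : (unitW m).getD (t+1) 0 = 1 := by rw [← h]; congr 1; omega
        rw [unitW, List.getD_cons_succ] at h1
        have h0 : (List.replicate (padicValNat 2 (m+1)) (0:ℕ)).getD t 0 = 0 := by
          rcases Nat.lt_or_ge t (padicValNat 2 (m+1)) with h' | h'
          · rw [List.getD_eq_getElem (List.replicate (padicValNat 2 (m+1)) (0:ℕ)) 0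
                (by simpa using h')]
            simp
          · simp [List.getD_eq_default, h']
        omega
      · exact ⟨m, by rw [← heq, W_length]⟩

def mm (b : ℕ → ℕ) : ℕ → ℕ
  | 0 => 1
  | k + 1 => 2 * b (k+1) * mm b k

lemma mm_pow (b : ℕ → ℕ) (hb : ∀ n, 1 ≤ n → ∃ e : ℕ, b n = 2 ^ e) (k : ℕ) :
    ∃ E, mm b k = 2 ^ E ∧ k ≤ E := by
  induction k with
  | zero => exact ⟨0, rfl, le_refl 0⟩
  | succ k ih =>
    obtain ⟨E, hE, hkE⟩ := ih
    obtain ⟨e, he⟩ := hb (k+1) (by omega)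
    exact ⟨e + 1 + E, by rw [mm, hE, he]; ring, by omega⟩

lemma wseq_eq (b : ℕ → ℕ) (hb : ∀ n, 1 ≤ n → ∃ e : ℕ, b n = 2 ^ e) (k : ℕ) :
    wseq b k = W (mm b k) := by
  induction k with
  | zero => simp [wseq, W, mm, unitW, List.range_succ]
  | succ k ih =>
    obtain ⟨E, hE, _⟩ := mm_pow b hb k
    rw [wseq, ih, mm, hE, W_mul E (2 * b (k+1))]

theorem main (b : ℕ → ℕ) (hb : ∀ n, 1 ≤ n → ∃ e : ℕ, b n = 2 ^ e)
    (w : ℕ → ℕ)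
    (hw : ∀ k, ∀ i < (wseq b k).length, w i = (wseq b k).getD i 0) :
    {n : ℕ | w n = 1}
      = {n : ℕ | ∃ i : ℕ, n = i + ∑ j ∈ Finset.Icc 1 i, padicValNat 2 j} := by
  have hbig : ∀ n : ℕ, ∃ k, n < mm b k := by
    intro n
    obtain ⟨E, hE, hkE⟩ := mm_pow b hb n
    refine ⟨n, ?_⟩
    rw [hE]
    exact lt_of_lt_of_le (Nat.lt_two_pow_self (n := n)) (Nat.pow_le_pow_right (by norm_num) hkE)
  have hz0le : ∀ i, i ≤ z0 i := fun i => Nat.le_add_right _ _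
  ext n
  simp only [Set.mem_setOf_eq]
  constructor
  · intro h
    obtain ⟨k, hk⟩ := hbig n
    have hlen : n < (wseq b k).length := by
      rw [wseq_eq b hb, W_length]; exact lt_of_lt_of_le hk (hz0le _)
    have := hw k n hlen
    rw [wseq_eq b hb] at this hlen
    rw [W_length] at hlen
    obtain ⟨i, hi⟩ := W_getD_one (by rw [W_length]; exact hlen) (by rw [← this]; exact h)
    exact ⟨i, hi⟩
  · rintro ⟨i, rfl⟩
    obtain ⟨k, hk⟩ := hbig i
    have hz : z0 i < z0 (mm b k) := z0_strictMono hk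
    have hlen : z0 i < (wseq b k).length := by rw [wseq_eq b hb, W_length]; exact hz
    have := hw k (z0 i) hlen
    rw [wseq_eq b hb] at this
    rw [show i + ∑ j ∈ Finset.Icc 1 i, padicValNat 2 j = z0 i from rfl]
    rw [this]
    exact W_getD_z0 hk

end S17

theorem stmt_17 (b : ℕ → ℕ) (hb : ∀ n, 1 ≤ n → ∃ e : ℕ, b n = 2 ^ e)
    (w : ℕ → ℕ)
    (hw : ∀ k, ∀ i < (wseq b k).length, w i = (wseq b k).getD i 0) :
    {n : ℕ | w n = 1}
      = {n : ℕ | ∃ i : ℕ, n = i + ∑ j ∈ Finset.Icc 1 i, padicValNat 2 j} := by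
  exact S17.main b hb w hw
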